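/- arXiv:nlin/0103035 — 2 statements merged into one kernel-verified Lean document; each statement's English description precedes it below -/
import Mathlib

section
/- GLM advection of a covariant symmetric tensor (mean Cauchy–Green strain). Suppose S : ℝⁿ × ℝ → (symmetric n×n real matrices) is smooth and satisfies the covariant advection law ∂ₜS_{ab} + u^k ∂_k S_{ab} + S_{kb} ∂_a u^k + S_{ka} ∂_b u^k = 0 everywhere. Then the pulled-back tensor S̃(x,t) := (Dₓψ(t,x))ᵀ · S(ψ(t,x), t) · Dₓψ(t,x) satisfies the same advection law with w in place of u: ∂ₜS̃_{ab} + w^k ∂_k S̃_{ab} + S̃_{kb} ∂_a w^k + S̃_{ka} ∂_b w^k = 0 everywhere. -/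
open scoped BigOperators
open Matrix

noncomputable section

/-- Spatial Jacobian matrix of a map `f : ℝⁿ → ℝⁿ` at `x`. -/
def jacobian {n : ℕ} (f : (Fin n → ℝ) → (Fin n → ℝ)) (x : Fin n → ℝ) :
    Matrix (Fin n) (Fin n) ℝ :=
  fun i j => fderiv ℝ (fun y => f y i) x (Pi.single j 1)

/-- The covariant advection operator applied to a time-dependent matrix field `S`
with velocity `u` at the point `(x,t)` and entry `(a,b)`:
`∂ₜS_{ab} + u^k ∂_k S_{ab} + S_{kb} ∂_a u^k + S_{ka} ∂_b u^k` (summation over `k`). -/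
def covAdvect {n : ℕ} (u : (Fin n → ℝ) → ℝ → (Fin n → ℝ))
    (S : (Fin n → ℝ) → ℝ → Matrix (Fin n) (Fin n) ℝ)
    (x : Fin n → ℝ) (t : ℝ) (a b : Fin n) : ℝ :=
  deriv (fun s => S x s a b) t
    + ∑ k, u x t k * fderiv ℝ (fun y => S y t a b) x (Pi.single k 1)
    + ∑ k, S x t k b * fderiv ℝ (fun y => u y t k) x (Pi.single a 1)
    + ∑ k, S x t k a * fderiv ℝ (fun y => u y t k) x (Pi.single b 1)

/-!
Write `D = ∂ₜ + w·∇` for the material derivative along `w`, acting on functions of the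
space-time point `(x, t)`, and `Ψ(x, t) = ψ t x`. The velocity relation says `DΨ = u ∘ Ψ`.
Commuting `D` with a spatial derivative (symmetry of second derivatives) turns this into
`D(DₓΨ) = (Dₓu ∘ Ψ) · DₓΨ - DₓΨ · Dₓw`, while the chain rule and the advection law for `S`
give `D(S ∘ Ψ) = -((Dₓu)ᵀ S + Sᵀ Dₓu) ∘ Ψ`. The Leibniz rule for `(DₓΨ)ᵀ (S ∘ Ψ) DₓΨ` then
reduces the claim to a matrix identity, which holds because `S` is symmetric.
-/

section ProductCalculus

variable {E F G : Type*} [NormedAddCommGroup E] [NormedSpace ℝ E] [NormedAddCommGroup F]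
  [NormedSpace ℝ F] [NormedAddCommGroup G] [NormedSpace ℝ G]

lemma DifferentiableAt.comp_prodMk_left {f : E × F → G} {a : E} {b : F}
    (hf : DifferentiableAt ℝ f (a, b)) : DifferentiableAt ℝ (fun y => f (y, b)) a :=
  hf.comp a (differentiableAt_id.prodMk (differentiableAt_const b))

lemma DifferentiableAt.comp_prodMk_right {f : E × F → G} {a : E} {b : F}
    (hf : DifferentiableAt ℝ f (a, b)) : DifferentiableAt ℝ (fun s => f (a, s)) b :=
  hf.comp b ((differentiableAt_const a).prodMk differentiableAt_id)

lemma fderiv_comp_prodMk_left_apply {f : E × F → G} {a : E} {b : F}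
    (hf : DifferentiableAt ℝ f (a, b)) (v : E) :
    fderiv ℝ (fun y => f (y, b)) a v = fderiv ℝ f (a, b) (v, 0) := by
  have h : HasFDerivAt (fun y => f (y, b)) ((fderiv ℝ f (a, b)).comp (.inl ℝ E F)) a :=
    hf.hasFDerivAt.comp a (hasFDerivAt_prodMk_left a b)
  simp [h.fderiv]

lemma deriv_comp_prodMk_right {f : E × ℝ → G} {a : E} {b : ℝ}
    (hf : DifferentiableAt ℝ f (a, b)) :
    deriv (fun s => f (a, s)) b = fderiv ℝ f (a, b) (0, 1) := by
  have h : HasFDerivAt (fun s => f (a, s)) ((fderiv ℝ f (a, b)).comp (.inr ℝ E ℝ)) b :=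
    hf.hasFDerivAt.comp b (hasFDerivAt_prodMk_right a b)
  simp [← fderiv_apply_one_eq_deriv, h.fderiv]

lemma fderiv_apply_prodMk_one {f : E × ℝ → G} {a : E} {b : ℝ}
    (hf : DifferentiableAt ℝ f (a, b)) (v : E) :
    fderiv ℝ f (a, b) (v, 1) = deriv (fun s => f (a, s)) b + fderiv ℝ (fun y => f (y, b)) a v := by
  rw [fderiv_comp_prodMk_left_apply hf, deriv_comp_prodMk_right hf, ← map_add]
  simp

lemma fderiv_comp_prodMk_snd_apply {f : F × ℝ → G} {Ψ : E × ℝ → F} {p : E × ℝ}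
    (hf : DifferentiableAt ℝ f (Ψ p, p.2)) (hΨ : DifferentiableAt ℝ Ψ p) (v : E × ℝ) :
    fderiv ℝ (fun q => f (Ψ q, q.2)) p v = fderiv ℝ f (Ψ p, p.2) (fderiv ℝ Ψ p v, v.2) := by
  have h : HasFDerivAt (fun q => f (Ψ q, q.2))
      ((fderiv ℝ f (Ψ p, p.2)).comp ((fderiv ℝ Ψ p).prod (.snd ℝ E ℝ))) p :=
    hf.hasFDerivAt.comp p (hΨ.hasFDerivAt.prodMk hasFDerivAt_snd)
  simp [h.fderiv]

lemma fderiv_fderiv_apply_comm {f : E → F} {W : E → E} {p : E} (hf : ContDiffAt ℝ 2 f p)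
    (hW : DifferentiableAt ℝ W p) (v : E) :
    fderiv ℝ (fun q => fderiv ℝ f q v) p (W p)
      = fderiv ℝ (fun q => fderiv ℝ f q (W q)) p v - fderiv ℝ f p (fderiv ℝ W p v) := by
  have h := VectorField.fderiv_apply_lieBracket hf (by simp) hW (differentiableAt_const v)
  simp only [VectorField.lieBracket, fderiv_fun_const, Pi.zero_apply, _root_.zero_apply,
    sub_zero] at h
  rw [h]; abel

lemma ContDiff.differentiable_fderiv_apply {f : E → F} (hf : ContDiff ℝ 2 f) (v : E) :
    Differentiable ℝ (fun q => fderiv ℝ f q v) :=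
  ((hf.fderiv_right (m := 1) (by norm_num)).clm_apply contDiff_const).differentiable one_ne_zero

end ProductCalculus

lemma ContinuousLinearMap.apply_eq_sum_single {ι G : Type*} [Fintype ι] [DecidableEq ι]
    [NormedAddCommGroup G] [NormedSpace ℝ G] (L : (ι → ℝ) →L[ℝ] G) (v : ι → ℝ) :
    L v = ∑ i, v i • L (Pi.single i 1) := by
  conv_lhs => rw [pi_eq_sum_univ' v]
  simp [map_sum, map_smul]

section EntryFDeriv

variable {X : Type*} [NormedAddCommGroup X] [NormedSpace ℝ X] {ι κ μ : Type*}

def entryFDeriv (M : X → Matrix ι κ ℝ) (p v : X) : Matrix ι κ ℝ :=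
  Matrix.of fun i j => fderiv ℝ (fun q => M q i j) p v

@[simp]
lemma entryFDeriv_apply (M : X → Matrix ι κ ℝ) (p v : X) (i : ι) (j : κ) :
    entryFDeriv M p v i j = fderiv ℝ (fun q => M q i j) p v := rfl

lemma entryFDeriv_transpose (M : X → Matrix ι κ ℝ) (p v : X) :
    entryFDeriv (fun q => (M q)ᵀ) p v = (entryFDeriv M p v)ᵀ := rfl

variable [Fintype κ] {p : X}

lemma differentiableAt_mul_apply {P : X → Matrix ι κ ℝ} {Q : X → Matrix κ μ ℝ}
    (hP : ∀ i j, DifferentiableAt ℝ (fun q => P q i j) p)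
    (hQ : ∀ i j, DifferentiableAt ℝ (fun q => Q q i j) p) (i : ι) (j : μ) :
    DifferentiableAt ℝ (fun q => (P q * Q q) i j) p := by
  simp only [Matrix.mul_apply]
  fun_prop

lemma entryFDeriv_mul {P : X → Matrix ι κ ℝ} {Q : X → Matrix κ μ ℝ}
    (hP : ∀ i j, DifferentiableAt ℝ (fun q => P q i j) p)
    (hQ : ∀ i j, DifferentiableAt ℝ (fun q => Q q i j) p) (v : X) :
    entryFDeriv (fun q => P q * Q q) p v = entryFDeriv P p v * Q p + P p * entryFDeriv Q p v := by
  ext i j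
  simp only [entryFDeriv_apply, Matrix.mul_apply, Matrix.add_apply]
  rw [fderiv_fun_sum fun k _ => (hP i k).fun_mul (hQ k j)]
  simp [fderiv_fun_mul (hP _ _) (hQ _ _), Finset.sum_add_distrib, mul_comm, add_comm]

end EntryFDeriv

/-- With `J' = A J - J B` and `S' = -(Aᵀ S + Sᵀ A)`, the first line is the Leibniz expansion of
`(Jᵀ S J)'`. -/
lemma Matrix.covariant_pullback_identity {ι R : Type*} [Fintype ι] [CommRing R]
    (J S A B : Matrix ι ι R) (hS : Sᵀ = S) :
    ((A * J - J * B)ᵀ * S + Jᵀ * -(Aᵀ * S + Sᵀ * A)) * J + Jᵀ * S * (A * J - J * B)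
      + (Bᵀ * (Jᵀ * S * J) + (Jᵀ * S * J)ᵀ * B) = 0 := by
  simp only [Matrix.transpose_sub, Matrix.transpose_mul, Matrix.transpose_transpose, hS,
    Matrix.sub_mul, Matrix.mul_sub, Matrix.mul_neg, Matrix.neg_mul, Matrix.add_mul, Matrix.mul_add,
    Matrix.mul_assoc]
  abel

section Flow

variable {E : Type*} [NormedAddCommGroup E] [NormedSpace ℝ E]
  {Ψ : E × ℝ → E} {u w : E → ℝ → E} {x : E} {t : ℝ}

lemma fderiv_fderiv_flow_apply (hΨ : ContDiff ℝ 2 Ψ)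
    (hu : DifferentiableAt ℝ (fun p : E × ℝ => u p.1 p.2) (Ψ (x, t), t))
    (hw : DifferentiableAt ℝ (fun p : E × ℝ => w p.1 p.2) (x, t))
    (hflow : ∀ p : E × ℝ, fderiv ℝ Ψ p (w p.1 p.2, 1) = u (Ψ p) p.2) (v : E) :
    fderiv ℝ (fun q => fderiv ℝ Ψ q (v, 0)) (x, t) (w x t, 1)
      = fderiv ℝ (fun y => u y t) (Ψ (x, t)) (fderiv ℝ Ψ (x, t) (v, 0))
        - fderiv ℝ Ψ (x, t) (fderiv ℝ (fun y => w y t) x v, 0) := by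
  have hW : DifferentiableAt ℝ (fun p : E × ℝ => (w p.1 p.2, (1 : ℝ))) (x, t) :=
    hw.prodMk (differentiableAt_const _)
  rw [fderiv_fderiv_apply_comm (W := fun p : E × ℝ => (w p.1 p.2, (1 : ℝ)))
    hΨ.contDiffAt hW, funext hflow,
    fderiv_comp_prodMk_snd_apply (f := fun p : E × ℝ => u p.1 p.2) hu
      (hΨ.differentiable (by simp) _),
    hw.fderiv_prodMk (differentiableAt_const _)]
  simp [fderiv_comp_prodMk_left_apply hu, fderiv_comp_prodMk_left_apply hw]

lemma entryFDeriv_comp_flow {ι κ : Type*} {S : E → ℝ → Matrix ι κ ℝ}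
    (hΨ : DifferentiableAt ℝ Ψ (x, t))
    (hS : ∀ a b, DifferentiableAt ℝ (fun p : E × ℝ => S p.1 p.2 a b) (Ψ (x, t), t))
    (hflow : fderiv ℝ Ψ (x, t) (w x t, 1) = u (Ψ (x, t)) t) :
    entryFDeriv (fun p => S (Ψ p) p.2) (x, t) (w x t, 1)
      = entryFDeriv (fun p : E × ℝ => S p.1 p.2) (Ψ (x, t), t) (u (Ψ (x, t)) t, 1) := by
  ext a b
  simp only [entryFDeriv_apply]
  rw [fderiv_comp_prodMk_snd_apply (f := fun p : E × ℝ => S p.1 p.2 a b) (hS a b) hΨ, hflow]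

end Flow

section Coordinates

variable {n : ℕ} {Ψ : (Fin n → ℝ) × ℝ → Fin n → ℝ} {u w : (Fin n → ℝ) → ℝ → Fin n → ℝ}
  {S : (Fin n → ℝ) → ℝ → Matrix (Fin n) (Fin n) ℝ} {x : Fin n → ℝ} {t : ℝ}

lemma jacobian_eq_toMatrix' {f : (Fin n → ℝ) → Fin n → ℝ} {x : Fin n → ℝ}
    (hf : DifferentiableAt ℝ f x) :
    jacobian f x = LinearMap.toMatrix' (fderiv ℝ f x : (Fin n → ℝ) →ₗ[ℝ] Fin n → ℝ) := by
  ext i j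
  simp [jacobian, LinearMap.toMatrix'_apply, fderiv_apply hf]

lemma jacobian_mulVec {f : (Fin n → ℝ) → Fin n → ℝ} {x : Fin n → ℝ}
    (hf : DifferentiableAt ℝ f x) (v : Fin n → ℝ) :
    jacobian f x *ᵥ v = fderiv ℝ f x v := by
  rw [jacobian_eq_toMatrix' hf, LinearMap.toMatrix'_mulVec]
  rfl

lemma covAdvect_eq_entryFDeriv_add
    (hS : ∀ a b, DifferentiableAt ℝ (fun p : (Fin n → ℝ) × ℝ => S p.1 p.2 a b) (x, t)) :
    (covAdvect u S x t : Matrix (Fin n) (Fin n) ℝ) =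
      entryFDeriv (fun p : (Fin n → ℝ) × ℝ => S p.1 p.2) (x, t) (u x t, 1)
        + ((jacobian (fun y => u y t) x)ᵀ * S x t + (S x t)ᵀ * jacobian (fun y => u y t) x) := by
  ext a b
  rw [Matrix.add_apply, entryFDeriv_apply, fderiv_apply_prodMk_one (hS a b),
    ContinuousLinearMap.apply_eq_sum_single]
  simp only [covAdvect, jacobian, Matrix.mul_apply, Matrix.add_apply, Matrix.transpose_apply,
    smul_eq_mul]
  simp only [mul_comm (fderiv ℝ _ x _) (S x t _ _), add_assoc]

lemma jacobian_slice_mulVec (hΨ : DifferentiableAt ℝ Ψ (x, t)) (v : Fin n → ℝ) :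
    jacobian (fun y => Ψ (y, t)) x *ᵥ v = fderiv ℝ Ψ (x, t) (v, 0) := by
  rw [jacobian_mulVec hΨ.comp_prodMk_left, fderiv_comp_prodMk_left_apply hΨ]

lemma jacobian_slice_apply (hΨ : DifferentiableAt ℝ Ψ (x, t)) (i j : Fin n) :
    jacobian (fun y => Ψ (y, t)) x i j = fderiv ℝ Ψ (x, t) (Pi.single j 1, 0) i := by
  rw [← jacobian_slice_mulVec hΨ, Matrix.mulVec_single_one]
  rfl

lemma differentiable_jacobian_slice_apply (hΨ : ContDiff ℝ 2 Ψ) (i j : Fin n) :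
    Differentiable ℝ (fun p : (Fin n → ℝ) × ℝ => jacobian (fun y => Ψ (y, p.2)) p.1 i j) := by
  have hΨd : Differentiable ℝ Ψ := hΨ.differentiable (by simp)
  simp only [fun p : (Fin n → ℝ) × ℝ => jacobian_slice_apply (hΨd p) i j]
  exact differentiable_pi.1 (hΨ.differentiable_fderiv_apply _) i

lemma entryFDeriv_jacobian_flow (hΨ : ContDiff ℝ 2 Ψ)
    (hu : DifferentiableAt ℝ (fun p : (Fin n → ℝ) × ℝ => u p.1 p.2) (Ψ (x, t), t))
    (hw : DifferentiableAt ℝ (fun p : (Fin n → ℝ) × ℝ => w p.1 p.2) (x, t))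
    (hflow : ∀ p : (Fin n → ℝ) × ℝ, fderiv ℝ Ψ p (w p.1 p.2, 1) = u (Ψ p) p.2) :
    entryFDeriv (fun p => jacobian (fun y => Ψ (y, p.2)) p.1) (x, t) (w x t, 1)
      = jacobian (fun y => u y t) (Ψ (x, t)) * jacobian (fun y => Ψ (y, t)) x
        - jacobian (fun y => Ψ (y, t)) x * jacobian (fun y => w y t) x := by
  have hΨd : Differentiable ℝ Ψ := hΨ.differentiable (by simp)
  have hcol : ∀ (p : (Fin n → ℝ) × ℝ) (i j : Fin n),
      jacobian (fun y => Ψ (y, p.2)) p.1 i j = fderiv ℝ Ψ p (Pi.single j 1, 0) i :=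
    fun p i j => jacobian_slice_apply (hΨd p) i j
  refine Matrix.ext_of_mulVec_single fun j => ?_
  rw [Matrix.sub_mulVec, ← Matrix.mulVec_mulVec, ← Matrix.mulVec_mulVec,
    jacobian_slice_mulVec (hΨd _), jacobian_mulVec hu.comp_prodMk_left,
    jacobian_mulVec hw.comp_prodMk_left, jacobian_slice_mulVec (hΨd _),
    ← fderiv_fderiv_flow_apply hΨ hu hw hflow]
  ext i
  rw [Matrix.mulVec_single_one, Matrix.col_apply, entryFDeriv_apply]
  simp only [hcol]
  rw [fderiv_apply (hΨ.differentiable_fderiv_apply _ _) i]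
  rfl

lemma fderiv_flow_apply_of_velocity {ψ : ℝ → (Fin n → ℝ) → Fin n → ℝ}
    (hψ : DifferentiableAt ℝ (fun p : (Fin n → ℝ) × ℝ => ψ p.2 p.1) (x, t))
    (hrel : u (ψ t x) t =
      (fun i => deriv (fun s => ψ s x i) t) + (jacobian (ψ t) x).mulVec (w x t)) :
    fderiv ℝ (fun p : (Fin n → ℝ) × ℝ => ψ p.2 p.1) (x, t) (w x t, 1) = u (ψ t x) t := by
  rw [hrel, fderiv_apply_prodMk_one hψ, jacobian_mulVec hψ.comp_prodMk_left,
    deriv_pi (differentiableAt_pi.1 hψ.comp_prodMk_right)]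

theorem covAdvect_pullback_eq_zero (hΨ : ContDiff ℝ 2 Ψ)
    (hu : DifferentiableAt ℝ (fun p : (Fin n → ℝ) × ℝ => u p.1 p.2) (Ψ (x, t), t))
    (hw : DifferentiableAt ℝ (fun p : (Fin n → ℝ) × ℝ => w p.1 p.2) (x, t))
    (hS : ∀ a b, Differentiable ℝ (fun p : (Fin n → ℝ) × ℝ => S p.1 p.2 a b))
    (hSsym : (S (Ψ (x, t)) t)ᵀ = S (Ψ (x, t)) t)
    (hflow : ∀ p : (Fin n → ℝ) × ℝ, fderiv ℝ Ψ p (w p.1 p.2, 1) = u (Ψ p) p.2)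
    (hadv : covAdvect u S (Ψ (x, t)) t = 0) :
    covAdvect w (fun y s => (jacobian (fun y' => Ψ (y', s)) y)ᵀ * S (Ψ (y, s)) s
      * jacobian (fun y' => Ψ (y', s)) y) x t = 0 := by
  have hΨd : Differentiable ℝ Ψ := hΨ.differentiable (by simp)
  have hJ : ∀ i j, DifferentiableAt ℝ
      (fun p : (Fin n → ℝ) × ℝ => jacobian (fun y => Ψ (y, p.2)) p.1 i j) (x, t) :=
    fun i j => differentiable_jacobian_slice_apply hΨ i j _
  have hSΨ : ∀ a b, DifferentiableAt ℝ (fun p => S (Ψ p) p.2 a b) (x, t) := fun a b =>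
    (hS a b _).comp (x, t) ((hΨd _).prodMk differentiableAt_snd)
  have hJt : ∀ i j, DifferentiableAt ℝ
      (fun p : (Fin n → ℝ) × ℝ => (jacobian (fun y => Ψ (y, p.2)) p.1)ᵀ i j) (x, t) :=
    fun i j => hJ j i
  have hJS := differentiableAt_mul_apply hJt hSΨ
  have hS' : entryFDeriv (fun p => S (Ψ p) p.2) (x, t) (w x t, 1) =
      -((jacobian (fun y => u y t) (Ψ (x, t)))ᵀ * S (Ψ (x, t)) t
        + (S (Ψ (x, t)) t)ᵀ * jacobian (fun y => u y t) (Ψ (x, t))) := by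
    rw [covAdvect_eq_entryFDeriv_add (fun a b => hS a b _)] at hadv
    rw [entryFDeriv_comp_flow (hΨd _) (fun a b => hS a b _) (hflow _)]
    exact eq_neg_of_add_eq_zero_left hadv
  rw [covAdvect_eq_entryFDeriv_add (differentiableAt_mul_apply hJS hJ)]
  simp only [Prod.mk.eta]
  rw [entryFDeriv_mul hJS hJ, entryFDeriv_mul hJt hSΨ, entryFDeriv_transpose,
    entryFDeriv_jacobian_flow hΨ hu hw hflow, hS']
  exact Matrix.covariant_pullback_identity _ _ _ _ hSsym

end Coordinates

theorem glm_covariant_tensor_advection_general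
    {n : ℕ}
    (ψ : ℝ → (Fin n → ℝ) → (Fin n → ℝ))
    (u w : (Fin n → ℝ) → ℝ → (Fin n → ℝ))
    (S : (Fin n → ℝ) → ℝ → Matrix (Fin n) (Fin n) ℝ)
    -- smoothness
    (hψ : ContDiff ℝ (⊤ : ℕ∞) (fun p : ℝ × (Fin n → ℝ) => ψ p.1 p.2))
    (hu : ContDiff ℝ (⊤ : ℕ∞) (fun p : (Fin n → ℝ) × ℝ => u p.1 p.2))
    (hw : ContDiff ℝ (⊤ : ℕ∞) (fun p : (Fin n → ℝ) × ℝ => w p.1 p.2))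
    (hS : ∀ a b, ContDiff ℝ (⊤ : ℕ∞) (fun p : (Fin n → ℝ) × ℝ => S p.1 p.2 a b))
    -- S is symmetric
    (hSsym : ∀ x t, (S x t)ᵀ = S x t)
    -- velocity relation : u(ψ(t,x),t) = ∂ₜψ(t,x) + Dₓψ(t,x)·w(x,t)
    (hrel : ∀ t x, u (ψ t x) t =
      (fun i => deriv (fun s => ψ s x i) t) + (jacobian (ψ t) x).mulVec (w x t))
    -- covariant advection law for S with velocity u
    (hadv : ∀ x t a b, covAdvect u S x t a b = 0) :
    -- conclusion : S̃ = (Dₓψ)ᵀ · S(ψ) · Dₓψ satisfies the advection law with w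
    ∀ x t a b,
      covAdvect w
        (fun y s => (jacobian (ψ s) y)ᵀ * S (ψ s y) s * jacobian (ψ s) y)
        x t a b = 0 := by
  intro x t a b
  have hΨ : ContDiff ℝ 2 (fun p : (Fin n → ℝ) × ℝ => ψ p.2 p.1) :=
    (hψ.comp (contDiff_snd.prodMk contDiff_fst)).of_le (WithTop.coe_le_coe.mpr le_top)
  have hflow : ∀ p : (Fin n → ℝ) × ℝ,
      fderiv ℝ (fun p : (Fin n → ℝ) × ℝ => ψ p.2 p.1) p (w p.1 p.2, 1) = u (ψ p.2 p.1) p.2 :=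
    fun ⟨y, s⟩ => fderiv_flow_apply_of_velocity (hΨ.differentiable (by simp) _) (hrel s y)
  have hpull := covAdvect_pullback_eq_zero (x := x) (t := t) hΨ (hu.differentiable (by simp) _)
    (hw.differentiable (by simp) _) (fun a b => (hS a b).differentiable (by simp)) (hSsym _ _)
    hflow (funext fun a => funext fun b => hadv _ _ a b)
  exact congrFun (congrFun hpull a) b

/-- **GLM advection of a covariant symmetric tensor (mean Cauchy–Green strain).**
If the symmetric tensor field `S` satisfies the covariant advection law with
velocity `u`, then the pulled-back tensor `S̃ = (Dₓψ)ᵀ · S(ψ) · Dₓψ` satisfies the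
same advection law with the pulled-back velocity `w`. -/
theorem glm_covariant_tensor_advection
    {n : ℕ}
    (ψ η : ℝ → (Fin n → ℝ) → (Fin n → ℝ))
    (u w : (Fin n → ℝ) → ℝ → (Fin n → ℝ))
    (S : (Fin n → ℝ) → ℝ → Matrix (Fin n) (Fin n) ℝ)
    -- smoothness
    (hψ : ContDiff ℝ (⊤ : ℕ∞) (fun p : ℝ × (Fin n → ℝ) => ψ p.1 p.2))
    (hu : ContDiff ℝ (⊤ : ℕ∞) (fun p : (Fin n → ℝ) × ℝ => u p.1 p.2))
    (hw : ContDiff ℝ (⊤ : ℕ∞) (fun p : (Fin n → ℝ) × ℝ => w p.1 p.2))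
    (hS : ∀ a b, ContDiff ℝ (⊤ : ℕ∞) (fun p : (Fin n → ℝ) × ℝ => S p.1 p.2 a b))
    -- S is symmetric
    (hSsym : ∀ x t, (S x t)ᵀ = S x t)
    -- ψ(t,·) is a diffeomorphism of ℝⁿ for every t, with smooth inverse η(t,·)
    (hη : ContDiff ℝ (⊤ : ℕ∞) (fun p : ℝ × (Fin n → ℝ) => η p.1 p.2))
    (hψη : ∀ t x, ψ t (η t x) = x)
    (hηψ : ∀ t x, η t (ψ t x) = x)
    -- velocity relation : u(ψ(t,x),t) = ∂ₜψ(t,x) + Dₓψ(t,x)·w(x,t)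
    (hrel : ∀ t x, u (ψ t x) t =
      (fun i => deriv (fun s => ψ s x i) t) + (jacobian (ψ t) x).mulVec (w x t))
    -- covariant advection law for S with velocity u
    (hadv : ∀ x t a b, covAdvect u S x t a b = 0) :
    -- conclusion : S̃ = (Dₓψ)ᵀ · S(ψ) · Dₓψ satisfies the advection law with w
    ∀ x t a b,
      covAdvect w
        (fun y s => (jacobian (ψ s) y)ᵀ * S (ψ s y) s * jacobian (ψ s) y)
        x t a b = 0 :=
  glm_covariant_tensor_advection_general ψ u w S hψ hu hw hS hSsym hrel hadv
end
end

section
/- Local helicity conservation law for the barotropic motion equation. Work in ℝ³. Let u, v : ℝ³ × ℝ → ℝ³ and g : ℝ³ × ℝ → ℝ be smooth and satisfy ∂ₜv = u × curl v − ∇g everywhere. Then the helicity density satisfies the local conservation law ∂ₜ(v · curl v) = div( (u × curl v) × v − g · curl v ) everywhere. Consequently, if there is a compact set K ⊂ ℝ³ such that v(·,t), u(·,t) and g(·,t) are supported in K for every t, then the total helicity Λ(t) := ∫_{ℝ³} v · curl v dx is constant in time. -/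
open scoped BigOperators
open MeasureTheory

noncomputable section

/-- Curl of a vector field on ℝ³ (cyclic, 0-based indices). -/
def curl3 (v : (Fin 3 → ℝ) → (Fin 3 → ℝ)) (x : Fin 3 → ℝ) : Fin 3 → ℝ :=
  fun i => fderiv ℝ (fun y => v y (i + 2)) x (Pi.single (i + 1) 1)
         - fderiv ℝ (fun y => v y (i + 1)) x (Pi.single (i + 2) 1)

/-- Cross product on ℝ³. -/
def cross (a b : Fin 3 → ℝ) : Fin 3 → ℝ :=
  fun i => a (i + 1) * b (i + 2) - a (i + 2) * b (i + 1)

/-! Write `ω = curl v` and `a = u × ω`, so that the motion equation reads `∂ₜv = a - ∇g`.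
Since time and space derivatives commute and `curl ∇g = 0`, also `∂ₜω = curl a`, hence
`∂ₜ(v·ω) = a·ω - ∇g·ω + v·curl a`. On the other side `div (a × v) = v·curl a - a·ω` and
`div (g ω) = ∇g·ω` because `div curl = 0`; the two sides agree since `a·ω = (u × ω)·ω = 0`.
For the global statement, differentiate `Λ` under the integral sign: by the local law
`Λ'(t)` is the integral of the divergence of a compactly supported field, which vanishes. -/

open scoped ContDiff

section MixedPartials

variable {E E' G : Type*} [NormedAddCommGroup E] [NormedSpace ℝ E]
  [NormedAddCommGroup E'] [NormedSpace ℝ E'] [NormedAddCommGroup G] [NormedSpace ℝ G]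

theorem ContDiffAt.differentiableAt_fderiv_apply {f : E → G} {x : E} (hf : ContDiffAt ℝ 2 f x)
    (e : E) : DifferentiableAt ℝ (fun y => fderiv ℝ f y e) x :=
  ((hf.fderiv_right (m := 1) le_rfl).clm_apply contDiffAt_const).differentiableAt one_ne_zero

theorem fderiv_fderiv_apply_comm_s18 {f : E → G} {x : E} (hf : ContDiffAt ℝ 2 f x) (a b : E) :
    fderiv ℝ (fun y => fderiv ℝ f y a) x b = fderiv ℝ (fun y => fderiv ℝ f y b) x a := by
  have hd : DifferentiableAt ℝ (fderiv ℝ f) x :=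
    (hf.fderiv_right (m := 1) le_rfl).differentiableAt one_ne_zero
  have happly : ∀ c, fderiv ℝ (fun y => fderiv ℝ f y c) x = (fderiv ℝ (fderiv ℝ f) x).flip c :=
    fun c => by simpa using fderiv_clm_apply hd (differentiableAt_const c)
  rw [happly, happly]
  exact hf.isSymmSndFDerivAt (by simp [minSmoothness_of_isRCLikeNormedField]) b a

theorem ContDiff.comp_prodMk_const {n : WithTop ℕ∞} {F : E × E' → G} (hF : ContDiff ℝ n F)
    (t : E') : ContDiff ℝ n fun y => F (y, t) :=
  hF.comp (contDiff_id.prodMk contDiff_const)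

theorem fderiv_comp_prodMk_const {F : E × ℝ → G} {x : E} {t : ℝ}
    (hF : DifferentiableAt ℝ F (x, t)) (e : E) :
    fderiv ℝ (fun y => F (y, t)) x e = fderiv ℝ F (x, t) (e, 0) := by
  have hinl : HasFDerivAt (fun y : E => (y, t)) (ContinuousLinearMap.inl ℝ E ℝ) x :=
    (hasFDerivAt_id x).prodMk (hasFDerivAt_const t x)
  exact congrArg (· e) (hF.hasFDerivAt.comp x hinl).fderiv

theorem hasDerivAt_comp_prodMk_const {F : E × ℝ → G} {x : E} {t : ℝ}
    (hF : DifferentiableAt ℝ F (x, t)) :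
    HasDerivAt (fun s => F (x, s)) (fderiv ℝ F (x, t) (0, 1)) t :=
  hF.hasFDerivAt.comp_hasDerivAt t ((hasDerivAt_const t x).prodMk (hasDerivAt_id t))

theorem hasDerivAt_fderiv_comp_prodMk {F : E × ℝ → G} (hF : ContDiff ℝ 2 F) (x : E) (t : ℝ)
    (e : E) :
    HasDerivAt (fun s => fderiv ℝ (fun y => F (y, s)) x e)
      (fderiv ℝ (fun y => deriv (fun s => F (y, s)) t) x e) t := by
  have hF1 : Differentiable ℝ F := hF.differentiable (by simp)
  have hpartial : ∀ w : E × ℝ, Differentiable ℝ (fun p => fderiv ℝ F p w) := fun w p =>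
    hF.contDiffAt.differentiableAt_fderiv_apply w
  have hspace : (fun s => fderiv ℝ (fun y => F (y, s)) x e) = fun s => fderiv ℝ F (x, s) (e, 0) :=
    funext fun s => fderiv_comp_prodMk_const (hF1 _) e
  have htime : (fun y => deriv (fun s => F (y, s)) t) = fun y => fderiv ℝ F (y, t) (0, 1) :=
    funext fun y => (hasDerivAt_comp_prodMk_const (hF1 _)).deriv
  rw [hspace, htime, fderiv_comp_prodMk_const (hpartial _ _),
    fderiv_fderiv_apply_comm_s18 hF.contDiffAt]
  exact hasDerivAt_comp_prodMk_const (hpartial _ _)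

end MixedPartials

def divergence {n : ℕ} (W : (Fin n → ℝ) → Fin n → ℝ) (x : Fin n → ℝ) : ℝ :=
  ∑ i, fderiv ℝ (fun y => W y i) x (Pi.single i 1)

def grad {n : ℕ} (g : (Fin n → ℝ) → ℝ) (x : Fin n → ℝ) : Fin n → ℝ :=
  fun i => fderiv ℝ g x (Pi.single i 1)

theorem cross_eq_crossProduct (a b : Fin 3 → ℝ) : cross a b = crossProduct a b := by
  ext i; fin_cases i <;> rfl

section Regularity

variable {E : Type*} [NormedAddCommGroup E] [NormedSpace ℝ E]

theorem DifferentiableAt.cross {a b : E → Fin 3 → ℝ} {x : E} (ha : DifferentiableAt ℝ a x)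
    (hb : DifferentiableAt ℝ b x) : DifferentiableAt ℝ (fun y => cross (a y) (b y)) x := by
  have ha' : ∀ i, DifferentiableAt ℝ (fun y => a y i) x := differentiableAt_pi.1 ha
  have hb' : ∀ i, DifferentiableAt ℝ (fun y => b y i) x := differentiableAt_pi.1 hb
  exact differentiableAt_pi.2 fun i => by simp only [_root_.cross]; fun_prop

theorem ContDiff.cross {n : WithTop ℕ∞} {a b : E → Fin 3 → ℝ} (ha : ContDiff ℝ n a)
    (hb : ContDiff ℝ n b) : ContDiff ℝ n (fun y => cross (a y) (b y)) := by
  have ha' : ∀ i, ContDiff ℝ n (fun y => a y i) := contDiff_pi.1 ha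
  have hb' : ∀ i, ContDiff ℝ n (fun y => b y i) := contDiff_pi.1 hb
  exact contDiff_pi.2 fun i => by simp only [_root_.cross]; fun_prop

theorem ContDiff.dotProduct {ι : Type*} [Fintype ι] {n : WithTop ℕ∞} {a b : E → ι → ℝ}
    (ha : ContDiff ℝ n a) (hb : ContDiff ℝ n b) : ContDiff ℝ n fun y => a y ⬝ᵥ b y :=
  ContDiff.sum fun i _ => (contDiff_pi.1 ha i).mul (contDiff_pi.1 hb i)

end Regularity

section Divergence

variable {n : ℕ} {V W : (Fin n → ℝ) → Fin n → ℝ} {g : (Fin n → ℝ) → ℝ} {x : Fin n → ℝ}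

theorem divergence_sub (hV : DifferentiableAt ℝ V x) (hW : DifferentiableAt ℝ W x) :
    divergence (fun y => V y - W y) x = divergence V x - divergence W x := by
  simp only [divergence, ← Finset.sum_sub_distrib, Pi.sub_apply]
  refine Finset.sum_congr rfl fun i _ => ?_
  rw [fderiv_fun_sub (differentiableAt_pi.1 hV i) (differentiableAt_pi.1 hW i)]
  rfl

theorem divergence_smul (hg : DifferentiableAt ℝ g x) (hW : DifferentiableAt ℝ W x) :
    divergence (fun y => g y • W y) x = grad g x ⬝ᵥ W x + g x * divergence W x := by
  simp only [divergence, grad, dotProduct, Finset.mul_sum, ← Finset.sum_add_distrib,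
    Pi.smul_apply, smul_eq_mul]
  refine Finset.sum_congr rfl fun i _ => ?_
  rw [fderiv_fun_mul hg (differentiableAt_pi.1 hW i)]
  simp only [add_apply, smul_apply, smul_eq_mul]
  ring

end Divergence

section Curl

variable {a b : (Fin 3 → ℝ) → Fin 3 → ℝ} {g : (Fin 3 → ℝ) → ℝ} {x : Fin 3 → ℝ}

theorem ContDiffAt.differentiableAt_curl3 (ha : ContDiffAt ℝ 2 a x) :
    DifferentiableAt ℝ (curl3 a) x :=
  differentiableAt_pi.2 fun _ => ((contDiffAt_pi.1 ha _).differentiableAt_fderiv_apply _).sub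
    ((contDiffAt_pi.1 ha _).differentiableAt_fderiv_apply _)

theorem ContDiffAt.differentiableAt_grad (hg : ContDiffAt ℝ 2 g x) :
    DifferentiableAt ℝ (grad g) x :=
  differentiableAt_pi.2 fun _ => hg.differentiableAt_fderiv_apply _

theorem curl3_sub (ha : DifferentiableAt ℝ a x) (hb : DifferentiableAt ℝ b x) :
    curl3 (fun y => a y - b y) x = curl3 a x - curl3 b x := by
  ext i
  simp only [curl3, Pi.sub_apply, fderiv_fun_sub (differentiableAt_pi.1 ha _)
    (differentiableAt_pi.1 hb _), sub_apply]
  ring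

theorem curl3_grad (hg : ContDiffAt ℝ 2 g x) : curl3 (grad g) x = 0 := by
  ext i
  simp only [curl3, grad, Pi.zero_apply, fderiv_fderiv_apply_comm_s18 hg, sub_self]

theorem divergence_curl3 (ha : ContDiffAt ℝ 2 a x) : divergence (curl3 a) x = 0 := by
  have hpartial : ∀ i j, DifferentiableAt ℝ
      (fun y => fderiv ℝ (fun z => a z i) y (Pi.single j 1)) x :=
    fun i j => (contDiffAt_pi.1 ha i).differentiableAt_fderiv_apply _
  have hcomm : ∀ i j k, fderiv ℝ (fun y => fderiv ℝ (fun z => a z i) y (Pi.single j 1)) x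
      (Pi.single k 1) = fderiv ℝ (fun y => fderiv ℝ (fun z => a z i) y (Pi.single k 1)) x
      (Pi.single j 1) :=
    fun i j k => fderiv_fderiv_apply_comm_s18 (contDiffAt_pi.1 ha i) _ _
  simp only [divergence, curl3, Fin.sum_univ_three, Fin.reduceAdd,
    fderiv_fun_sub (hpartial _ _) (hpartial _ _), sub_apply]
  rw [hcomm 0 1 2, hcomm 1 0 2, hcomm 2 0 1]
  ring

theorem divergence_cross (ha : DifferentiableAt ℝ a x) (hb : DifferentiableAt ℝ b x) :
    divergence (fun y => cross (a y) (b y)) x = b x ⬝ᵥ curl3 a x - a x ⬝ᵥ curl3 b x := by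
  have ha' : ∀ i, DifferentiableAt ℝ (fun y => a y i) x := differentiableAt_pi.1 ha
  have hb' : ∀ i, DifferentiableAt ℝ (fun y => b y i) x := differentiableAt_pi.1 hb
  simp only [divergence, cross, curl3, dotProduct, Fin.sum_univ_three, Fin.reduceAdd]
  simp (disch := fun_prop) only [fderiv_fun_sub, fderiv_fun_mul, sub_apply, add_apply,
    smul_apply, smul_eq_mul]
  ring

theorem divergence_helicityFlux {u v : (Fin 3 → ℝ) → Fin 3 → ℝ} (hu : DifferentiableAt ℝ u x)
    (hv : ContDiffAt ℝ 2 v x) (hg : ContDiffAt ℝ 2 g x) :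
    divergence (fun y => cross (cross (u y) (curl3 v y)) (v y) - g y • curl3 v y) x
      = (cross (u x) (curl3 v x) - grad g x) ⬝ᵥ curl3 v x
        + v x ⬝ᵥ curl3 (fun y => cross (u y) (curl3 v y) - grad g y) x := by
  have hcurl := hv.differentiableAt_curl3
  have hf : DifferentiableAt ℝ (fun y => cross (u y) (curl3 v y)) x := hu.cross hcurl
  have hdv : DifferentiableAt ℝ v x := hv.differentiableAt two_ne_zero
  have hdg : DifferentiableAt ℝ g x := hg.differentiableAt two_ne_zero
  have hperp : cross (u x) (curl3 v x) ⬝ᵥ curl3 v x = 0 := by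
    rw [dotProduct_comm, cross_eq_crossProduct, dot_cross_self]
  rw [divergence_sub (hf.cross hdv) (W := fun y => g y • curl3 v y) (hdg.smul hcurl),
    divergence_cross hf hdv, divergence_smul hdg hcurl, divergence_curl3 hv,
    curl3_sub hf hg.differentiableAt_grad, curl3_grad hg, sub_dotProduct, dotProduct_sub, hperp]
  simp only [dotProduct_zero, mul_zero]
  ring

end Curl

section TimeDependent

variable {v : (Fin 3 → ℝ) → ℝ → Fin 3 → ℝ}

theorem hasDerivAt_curl3_apply (hv : ContDiff ℝ 2 (Function.uncurry v)) (x : Fin 3 → ℝ)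
    (t : ℝ) (i : Fin 3) :
    HasDerivAt (fun s => curl3 (fun y => v y s) x i)
      (curl3 (fun y j => deriv (fun s => v y s j) t) x i) t :=
  (hasDerivAt_fderiv_comp_prodMk (contDiff_pi.1 hv _) x t _).sub
    (hasDerivAt_fderiv_comp_prodMk (contDiff_pi.1 hv _) x t _)

theorem deriv_dotProduct_curl3 (hv : ContDiff ℝ 2 (Function.uncurry v)) (x : Fin 3 → ℝ)
    (t : ℝ) :
    deriv (fun s => v x s ⬝ᵥ curl3 (fun y => v y s) x) t
      = (fun j => deriv (fun s => v x s j) t) ⬝ᵥ curl3 (fun y => v y t) x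
        + v x t ⬝ᵥ curl3 (fun y j => deriv (fun s => v y s j) t) x := by
  have hvt : ∀ j, DifferentiableAt ℝ (fun s => v x s j) t := fun j =>
    ((contDiff_pi.1 hv j).comp (contDiff_const.prodMk contDiff_id)).differentiable
      two_ne_zero t
  simp only [dotProduct, ← Finset.sum_add_distrib]
  exact (HasDerivAt.fun_sum fun j _ =>
    (hvt j).hasDerivAt.mul (hasDerivAt_curl3_apply hv x t j)).deriv

theorem contDiff_curl3_uncurry {n : WithTop ℕ∞} (hv : ContDiff ℝ (n + 1) (Function.uncurry v)) :
    ContDiff ℝ n (fun p : (Fin 3 → ℝ) × ℝ => curl3 (fun y => v y p.2) p.1) := by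
  have hpartial : ∀ j k : Fin 3, ContDiff ℝ n
      (fun p : (Fin 3 → ℝ) × ℝ => fderiv ℝ (fun y => v y p.2 j) p.1 (Pi.single k 1)) :=
    fun j k => ContDiff.fderiv_apply (f := fun p y => v y p.2 j)
      ((contDiff_pi.1 hv j).comp (contDiff_snd.prodMk (contDiff_snd.comp contDiff_fst)))
      contDiff_fst contDiff_const le_rfl
  exact contDiff_pi.2 fun i => (hpartial _ _).sub (hpartial _ _)

end TimeDependent
section Integrals

variable {E : Type*} [NormedAddCommGroup E] [NormedSpace ℝ E] [MeasurableSpace E]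

theorem HasCompactSupport.integral_fderiv_apply_eq_zero [FiniteDimensional ℝ E] [BorelSpace E]
    {μ : Measure E} [μ.IsAddHaarMeasure] {f : E → ℝ} (hf : ContDiff ℝ 1 f)
    (hc : HasCompactSupport f) (e : E) : ∫ x, fderiv ℝ f x e ∂μ = 0 := by
  have hfe : Continuous fun x => fderiv ℝ f x e :=
    (hf.continuous_fderiv one_ne_zero).clm_apply continuous_const
  have := integral_mul_fderiv_eq_neg_fderiv_mul_of_integrable (μ := μ) (f := fun _ => (1 : ℝ))
    (g := f) (v := e) (by simp)
    (by simpa using hfe.integrable_of_hasCompactSupport (hc.fderiv_apply (𝕜 := ℝ) e))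
    (by simpa using hf.continuous.integrable_of_hasCompactSupport hc)
    (fun _ _ => differentiableAt_const _) (fun x _ => hf.differentiable one_ne_zero x)
  simpa using this

theorem integral_divergence_eq_zero {n : ℕ} {W : (Fin n → ℝ) → Fin n → ℝ}
    (hW : ContDiff ℝ 1 W) (hc : HasCompactSupport W) : ∫ x, divergence W x = 0 := by
  have hWi : ∀ i, ContDiff ℝ 1 (fun y => W y i) := contDiff_pi.1 hW
  have hci : ∀ i, HasCompactSupport (fun y => W y i) := fun i =>
    hc.comp_left (g := fun w : Fin n → ℝ => w i) rfl
  simp only [divergence]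
  rw [integral_finsetSum _ fun i _ =>
    ((hWi i).continuous_fderiv one_ne_zero).clm_apply continuous_const
      |>.integrable_of_hasCompactSupport ((hci i).fderiv_apply (𝕜 := ℝ) _)]
  exact Finset.sum_eq_zero fun i _ => (hci i).integral_fderiv_apply_eq_zero (hWi i) _

end Integrals

section ParametricIntegral

variable {E : Type*} [NormedAddCommGroup E] [NormedSpace ℝ E] [MeasurableSpace E]
  [OpensMeasurableSpace E] {μ : Measure E} [IsFiniteMeasureOnCompacts μ]

theorem hasDerivAt_integral_of_eq_zero_off_isCompact {F : E → ℝ → ℝ}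
    (hF : ContDiff ℝ 1 (Function.uncurry F)) {K : Set E} (hK : IsCompact K)
    (hFK : ∀ s, ∀ x ∉ K, F x s = 0) (t : ℝ) :
    HasDerivAt (fun s => ∫ x, F x s ∂μ) (∫ x, deriv (F x) t ∂μ) t := by
  set F' : E × ℝ → ℝ := fun p => fderiv ℝ (Function.uncurry F) p (0, 1)
  have hF' : ∀ x s, HasDerivAt (F x) (F' (x, s)) s := fun x s =>
    hasDerivAt_comp_prodMk_const (hF.differentiable one_ne_zero _)
  have hF'c : Continuous F' := (hF.continuous_fderiv one_ne_zero).clm_apply continuous_const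
  have hF'K : ∀ s, ∀ x ∉ K, F' (x, s) = 0 := fun s x hx =>
    (hF' x s).unique (by simpa [funext fun s => hFK s x hx] using hasDerivAt_const s (0 : ℝ))
  have hslice : ∀ s, Continuous fun x => F x s := fun s =>
    hF.continuous.comp (continuous_id.prodMk continuous_const)
  obtain ⟨C, hC⟩ := (hK.prod (isCompact_closedBall t 1)).exists_bound_of_continuousOn
    hF'c.continuousOn
  have hbound : ∀ x, ∀ s ∈ Metric.ball t 1, ‖F' (x, s)‖ ≤ K.indicator (fun _ => C) x := by
    intro x s hs
    by_cases hx : x ∈ K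
    · simpa [hx] using hC (x, s) ⟨hx, Metric.ball_subset_closedBall hs⟩
    · simp [hx, hF'K s x hx]
  have key := hasDerivAt_integral_of_dominated_loc_of_deriv_le (μ := μ)
    (F := fun s x => F x s) (F' := fun s x => F' (x, s)) (Metric.ball_mem_nhds t one_pos)
    (.of_forall fun s => (hslice s).aestronglyMeasurable)
    ((hslice t).integrable_of_hasCompactSupport (.intro hK (hFK t)))
    (hF'c.comp (continuous_id.prodMk continuous_const)).aestronglyMeasurable
    (.of_forall hbound)
    ((integrable_indicator_iff hK.measurableSet).2 (integrableOn_const hK.measure_lt_top.ne))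
    (.of_forall fun x s _ => hF' x s)
  simpa only [(hF' _ t).deriv] using key.2

end ParametricIntegral

theorem integral_eq_of_deriv_eq_divergence {n : ℕ} {H : (Fin n → ℝ) → ℝ → ℝ}
    {W : ℝ → (Fin n → ℝ) → Fin n → ℝ} (hH : ContDiff ℝ 1 (Function.uncurry H))
    {K : Set (Fin n → ℝ)} (hK : IsCompact K) (hHK : ∀ s, ∀ x ∉ K, H x s = 0)
    (hW : ∀ s, ContDiff ℝ 1 (W s)) (hWc : ∀ s, HasCompactSupport (W s))
    (hlaw : ∀ x s, deriv (H x) s = divergence (W s) x) (t₁ t₂ : ℝ) :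
    ∫ x, H x t₁ = ∫ x, H x t₂ := by
  have hderiv : ∀ t, HasDerivAt (fun s => ∫ x, H x s) 0 t := fun t => by
    simpa only [hlaw, integral_divergence_eq_zero (hW t) (hWc t)] using
      hasDerivAt_integral_of_eq_zero_off_isCompact (μ := volume) hH hK hHK t
  exact is_const_of_deriv_eq_zero (fun t => (hderiv t).differentiableAt)
    (fun t => (hderiv t).deriv) t₁ t₂

theorem deriv_helicity_eq_divergence {u v : (Fin 3 → ℝ) → ℝ → Fin 3 → ℝ}
    {g : (Fin 3 → ℝ) → ℝ → ℝ} (hu : ∀ t, Differentiable ℝ (fun y => u y t))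
    (hv : ContDiff ℝ 2 (Function.uncurry v)) (hg : ∀ t, ContDiff ℝ 2 (fun y => g y t))
    (hmotion : ∀ x t i, deriv (fun s => v x s i) t
      = cross (u x t) (curl3 (fun y => v y t) x) i - grad (fun y => g y t) x i)
    (x : Fin 3 → ℝ) (t : ℝ) :
    deriv (fun s => v x s ⬝ᵥ curl3 (fun y => v y s) x) t
      = divergence (fun y => cross (cross (u y t) (curl3 (fun z => v z t) y)) (v y t)
          - g y t • curl3 (fun z => v z t) y) x := by
  have hmotion' : (fun y i => deriv (fun s => v y s i) t)
      = fun y => cross (u y t) (curl3 (fun z => v z t) y) - grad (fun z => g z t) y :=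
    funext fun y => funext (hmotion y t)
  have hvt : ContDiffAt ℝ 2 (fun y => v y t) x := (hv.comp_prodMk_const t).contDiffAt
  rw [deriv_dotProduct_curl3 hv, hmotion', congrFun hmotion' x]
  exact (divergence_helicityFlux (hu t x) hvt (hg t).contDiffAt).symm

/-- **Local helicity conservation law for the barotropic motion equation.**
If `∂ₜv = u × curl v − ∇g`, then
`∂ₜ(v·curl v) = div((u × curl v) × v − g·curl v)`; consequently under uniform
compact support the total helicity `Λ(t) = ∫ v·curl v dx` is constant. -/
theorem helicity_conservation
    (u v : (Fin 3 → ℝ) → ℝ → (Fin 3 → ℝ))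
    (g : (Fin 3 → ℝ) → ℝ → ℝ)
    -- smoothness
    (hu : ContDiff ℝ (⊤ : ℕ∞) (fun p : (Fin 3 → ℝ) × ℝ => u p.1 p.2))
    (hv : ContDiff ℝ (⊤ : ℕ∞) (fun p : (Fin 3 → ℝ) × ℝ => v p.1 p.2))
    (hg : ContDiff ℝ (⊤ : ℕ∞) (fun p : (Fin 3 → ℝ) × ℝ => g p.1 p.2))
    -- motion equation : ∂ₜv = u × curl v − ∇g
    (hmotion : ∀ x t i,
      deriv (fun s => v x s i) t
        = cross (u x t) (curl3 (fun y => v y t) x) i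
          - fderiv ℝ (fun y => g y t) x (Pi.single i 1)) :
    -- local helicity conservation law
    ((∀ x t,
      deriv (fun s => ∑ i, v x s i * curl3 (fun y => v y s) x i) t
        = ∑ i, fderiv ℝ
            (fun y =>
              cross (cross (u y t) (curl3 (fun z => v z t) y)) (v y t) i
                - g y t * curl3 (fun z => v z t) y i) x
            (Pi.single i 1)))
    -- global conservation of total helicity under uniform compact support
    ∧ ((∃ K : Set (Fin 3 → ℝ), IsCompact K ∧
          ∀ t, (Function.support (fun x => v x t) ⊆ K)
            ∧ (Function.support (fun x => u x t) ⊆ K)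
            ∧ (Function.support (fun x => g x t) ⊆ K)) →
        ∀ t₁ t₂,
          (∫ x, ∑ i, v x t₁ i * curl3 (fun y => v y t₁) x i)
            = ∫ x, ∑ i, v x t₂ i * curl3 (fun y => v y t₂) x i) := by
  have hcurl : ContDiff ℝ ∞ fun p : (Fin 3 → ℝ) × ℝ => curl3 (fun y => v y p.2) p.1 :=
    contDiff_curl3_uncurry (hv.of_le (by simp))
  have local_law := deriv_helicity_eq_divergence (u := u) (v := v) (g := g)
    (fun t => (hu.comp_prodMk_const t).differentiable (by simp)) (hv.of_le (by norm_cast))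
    (fun t => (hg.comp_prodMk_const t).of_le (by norm_cast)) hmotion
  refine ⟨local_law, ?_⟩
  rintro ⟨K, hK, hsupp⟩ t₁ t₂
  have hvK : ∀ s, ∀ x ∉ K, v x s = 0 := fun s x hx =>
    Function.notMem_support.1 fun h => hx ((hsupp s).1 h)
  have hgK : ∀ s, ∀ x ∉ K, g x s = 0 := fun s x hx =>
    Function.notMem_support.1 fun h => hx ((hsupp s).2.2 h)
  refine integral_eq_of_deriv_eq_divergence ?_ hK (fun s x hx => by simp [hvK s x hx])
    (fun s => ?_)
    (fun s => .intro hK fun y hy => by simp [hvK s y hy, hgK s y hy, cross_eq_crossProduct])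
    local_law t₁ t₂
  · exact (hv.dotProduct hcurl).of_le (by simp)
  · exact ((((hu.comp_prodMk_const s).cross (hcurl.comp_prodMk_const s)).cross
      (hv.comp_prodMk_const s)).sub ((hg.comp_prodMk_const s).smul
        (hcurl.comp_prodMk_const s))).of_le (by simp)
end
end
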